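/- arXiv:2306.02474 — 2 statements merged into one kernel-verified Lean document; each statement's English description precedes it below -/
import Mathlib

section
/- For every t ∈ ℕ₀, the conditional expectation of the number of unhappy particles satisfies E[U_{t+1} | U_t] = U_t·(1 − ((n − H_t)/n)·(1 − 1/n)^{U_t − 1}) + H_t·(1 − (1 − 1/n)^{U_t}). -/
open MeasureTheory ProbabilityTheory Filter Real Topology
open scoped ENNReal

namespace Dispersion

/-- The uniform distribution on the `n` vertices `{0, …, n-1}`
(a junk Dirac measure at `0` if `n = 0`). -/
noncomputable def moveDist (n : ℕ) : Measure ℕ :=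
  if h : 0 < n then
    (PMF.uniformOfFinset (Finset.range n) (Finset.nonempty_range_iff.mpr h.ne')).toMeasure
  else Measure.dirac 0

/-- `IsDriver n μ G` says that the family `G (t, i)` of random destinations (of particle `i`
for the step from time `t` to time `t+1`) consists of independent random variables, each
uniformly distributed on the `n` vertices, on the probability space `(Ωs, μ)`.  Together
with `pos` below this encodes the dispersion process on the complete graph `K_n`
(with loops) with `M` particles. -/
structure IsDriver {Ωs : Type} [MeasurableSpace Ωs] (n : ℕ) (μ : Measure Ωs)
    (G : ℕ × ℕ → Ωs → ℕ) : Prop where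
  isProb : IsProbabilityMeasure μ
  meas : ∀ p, Measurable (G p)
  unif : ∀ p, μ.map (G p) = moveDist n
  indep : iIndepFun G μ

open Classical in
/-- The position of particle `i` (for `i < M`) at time `t` in the dispersion process:
all particles start on vertex `0`; a particle that is happy (alone on its vertex) stays
put, and an unhappy particle moves to the random destination prescribed by the driver. -/
noncomputable def pos {Ωs : Type} (M : ℕ) (G : ℕ × ℕ → Ωs → ℕ) (ω : Ωs) : ℕ → ℕ → ℕ
  | 0, _ => 0
  | t + 1, i =>
    if ∀ j, j < M → j ≠ i → pos M G ω t j ≠ pos M G ω t i then pos M G ω t i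
    else G (t, i) ω

open Classical in
/-- `U M G ω t` : the number of unhappy particles at time `t`. -/
noncomputable def U {Ωs : Type} (M : ℕ) (G : ℕ × ℕ → Ωs → ℕ) (ω : Ωs) (t : ℕ) : ℕ :=
  ((Finset.range M).filter
    (fun i => ∃ j, j < M ∧ j ≠ i ∧ pos M G ω t j = pos M G ω t i)).card

/-- The dispersion time `T_{n,M}`, as an element of `ℕ∞`. -/
noncomputable def T {Ωs : Type} (M : ℕ) (G : ℕ × ℕ → Ωs → ℕ) (ω : Ωs) : ℕ∞ :=
  sInf {m : ℕ∞ | ∃ t : ℕ, m = (t : ℕ∞) ∧ U M G ω t = 0}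

/-- The event `{T_{n,M} > r}` for a real threshold `r`. -/
def dispGT {Ωs : Type} (M : ℕ) (G : ℕ × ℕ → Ωs → ℕ) (r : ℝ) : Set Ωs :=
  {ω | ∀ t : ℕ, U M G ω t = 0 → r < (t : ℝ)}

/-- The event `{T_{n,M} ≤ r}` for a real threshold `r`. -/
def dispLE {Ωs : Type} (M : ℕ) (G : ℕ × ℕ → Ωs → ℕ) (r : ℝ) : Set Ωs :=
  {ω | ∃ t : ℕ, (t : ℝ) ≤ r ∧ U M G ω t = 0}

/-- The event `{T_{n,M} < r}` for a real threshold `r`. -/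
def dispLT {Ωs : Type} (M : ℕ) (G : ℕ × ℕ → Ωs → ℕ) (r : ℝ) : Set Ωs :=
  {ω | ∃ t : ℕ, (t : ℝ) < r ∧ U M G ω t = 0}

/-- `ε̂ = max {|ε|, e·n^{-1/2}}`. -/
noncomputable def ehat (n : ℕ) (e : ℝ) : ℝ :=
  max |e| (Real.exp 1 * (n : ℝ) ^ (-(1 / 2 : ℝ)))

/-!
Write `X_t` for the configuration of the particles at time `t` and `W_t` for the vector of
destinations drawn at time `t`. Then `X_{t+1} = step X_t W_t`, where `X_t` is a function of the
draws before time `t`, so `W_t` is independent of `X_t` and has law the product of uniform laws.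
Hence on `{X_t = x}` the conditional mean of `U_{t+1}` is the mean number of unhappy particles of
`step x W`, a sum over particles. A happy particle at `v` becomes unhappy iff some of the `U_t`
movers lands on `v`; a mover becomes happy iff it lands on one of the `n - H_t` vertices free of
happy particles and no other mover lands there. This mean depends on `x` only through `U_t`, and
the tower property passes from conditioning on `X_t` to conditioning on `U_t`.
-/

open Finset
open scoped Classical

section ConditionalExpectation

variable {Ω β : Type*} [MeasurableSpace Ω] {μ : Measure Ω} [IsFiniteMeasure μ]

lemma integrable_comp_of_le {φ : Ω → ℕ} (hφ : Measurable φ) {N : ℕ} (hN : ∀ ω, φ ω ≤ N)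
    (g : ℕ → ℝ) : Integrable (fun ω => g (φ ω)) μ :=
  .of_bound (Measurable.of_discrete.comp hφ).aestronglyMeasurable (∑ k ∈ range (N + 1), |g k|)
    (ae_of_all _ fun ω => single_le_sum (f := fun k => |g k|) (fun _ _ => abs_nonneg _)
      (mem_range.2 (Nat.lt_succ_of_le (hN ω))))

theorem condExp_comap_ae_eq_of_setIntegral_fiber [MeasurableSpace β] [DiscreteMeasurableSpace β]
    [Countable β] {Y : Ω → β} {f : Ω → ℝ} {g : β → ℝ} (hY : Measurable Y)
    (hf : Integrable f μ) (hg : Integrable (fun ω => g (Y ω)) μ)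
    (hfiber : ∀ y, ∫ ω in Y ⁻¹' {y}, f ω ∂μ = g y * μ.real (Y ⁻¹' {y})) :
    μ[f | MeasurableSpace.comap Y inferInstance] =ᵐ[μ] fun ω => g (Y ω) := by
  refine (ae_eq_condExp_of_forall_setIntegral_eq hY.comap_le hf (fun _ _ _ => hg.integrableOn)
    (fun s hs _ => ?_) (Measurable.of_discrete.comp (comap_measurable Y)).aestronglyMeasurable).symm
  obtain ⟨B, -, rfl⟩ := hs
  have hcover : Y ⁻¹' B = ⋃ y : B, Y ⁻¹' {(y : β)} := by
    ext ω
    simp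
  have hmeas : ∀ y : B, MeasurableSet (Y ⁻¹' {(y : β)}) := fun _ => hY .of_discrete
  have hdisj := (pairwise_disjoint_fiber Y).comp_of_injective
    (Subtype.val_injective (p := (· ∈ B)))
  rw [hcover, integral_iUnion hmeas hdisj hg.integrableOn,
    integral_iUnion hmeas hdisj hf.integrableOn]
  refine tsum_congr fun y => ?_
  rw [hfiber, setIntegral_congr_fun (hmeas y) fun ω (hω : Y ω = y) => congrArg g hω,
    setIntegral_const, smul_eq_mul, mul_comm]

end ConditionalExpectation

lemma measureReal_pi_pi {ι : Type*} [Fintype ι] {α : ι → Type*} [∀ i, MeasurableSpace (α i)]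
    (μ : ∀ i, Measure (α i)) [∀ i, SigmaFinite (μ i)] (s : ∀ i, Set (α i)) :
    (Measure.pi μ).real (Set.univ.pi s) = ∏ i, (μ i).real (s i) := by
  simp [measureReal_def, Measure.pi_pi, ENNReal.toReal_prod]

section Configuration

variable {ι α : Type*}

def Happy (x : ι → α) (i : ι) : Prop := ∀ j, j ≠ i → x j ≠ x i

noncomputable def numUnhappy [Fintype ι] (x : ι → α) : ℕ := #{i | ¬Happy x i}

noncomputable def step (x w : ι → α) : ι → α := fun i => if Happy x i then x i else w i

lemma step_of_happy {x : ι → α} (w : ι → α) {i : ι} (hi : Happy x i) : step x w i = x i :=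
  if_pos hi

lemma step_of_not_happy {x : ι → α} (w : ι → α) {i : ι} (hi : ¬Happy x i) : step x w i = w i :=
  if_neg hi

lemma numUnhappy_le [Fintype ι] (x : ι → α) : numUnhappy x ≤ Fintype.card ι :=
  card_filter_le _ _

lemma card_happy [Fintype ι] (x : ι → α) : #{i | Happy x i} = Fintype.card ι - numUnhappy x := by
  have := card_filter_add_card_filter_not (s := univ) (fun i => Happy x i)
  rw [numUnhappy, ← card_univ]
  omega

lemma injOn_happy (x : ι → α) : Set.InjOn x {i | Happy x i} :=
  fun _ _ _ hj hij => by_contra fun hne => hj _ hne hij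

lemma card_image_happy [Fintype ι] [DecidableEq α] (x : ι → α) :
    #(image x {j | Happy x j}) = Fintype.card ι - numUnhappy x := by
  rw [card_image_of_injOn (by simpa using injOn_happy x), card_happy]

lemma image_happy_subset_range [Fintype ι] {n : ℕ} {x : ι → ℕ} (hx : ∀ j, x j < n) :
    image x {j | Happy x j} ⊆ range n := by
  simp [subset_iff, hx]

end Configuration

section UniformStep

variable {ι : Type*} [Fintype ι] {n : ℕ}

instance isProbabilityMeasure_moveDist : IsProbabilityMeasure (moveDist n) := by
  unfold moveDist; split <;> infer_instance

lemma moveDist_real_singleton (hn : 0 < n) {v : ℕ} (hv : v < n) :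
    (moveDist n).real {v} = (n : ℝ)⁻¹ := by
  simp [measureReal_def, moveDist, hn, hv]

lemma moveDist_real_compl_singleton (hn : 0 < n) {v : ℕ} (hv : v < n) :
    (moveDist n).real {v}ᶜ = 1 - (n : ℝ)⁻¹ := by
  rw [probReal_compl_eq_one_sub (measurableSet_singleton v), moveDist_real_singleton hn hv]

lemma moveDist_compl_Iio (hn : 0 < n) : moveDist n (Set.Iio n)ᶜ = 0 := by
  simp [moveDist, hn]

lemma measureReal_happy_step_of_happy (hn : 0 < n) (x : ι → ℕ) {i : ι} (hxi : x i < n)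
    (hi : Happy x i) :
    (Measure.pi fun _ : ι => moveDist n).real {w | Happy (step x w) i} =
      (1 - (n : ℝ)⁻¹) ^ numUnhappy x := by
  have hset : {w | Happy (step x w) i} =
      Set.univ.pi fun j => if Happy x j then Set.univ else {x i}ᶜ := by
    ext w
    rw [Set.mem_univ_pi]
    change (∀ j, j ≠ i → step x w j ≠ step x w i) ↔ _
    refine forall_congr' fun j => ?_
    rw [step_of_happy w hi]
    by_cases hj : Happy x j
    · rw [if_pos hj, step_of_happy w hj]
      exact iff_of_true (hi j) trivial
    · have hji : j ≠ i := fun h => hj (h ▸ hi)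
      rw [if_neg hj, step_of_not_happy w hj]
      simp [hji]
  rw [hset, measureReal_pi_pi, numUnhappy, ← prod_const, prod_filter]
  refine prod_congr rfl fun j _ => ?_
  split_ifs <;> simp [moveDist_real_compl_singleton hn hxi]

lemma measureReal_happy_step_of_not_happy (hn : 0 < n) (x : ι → ℕ) (hx : ∀ j, x j < n) {i : ι}
    (hi : ¬Happy x i) :
    (Measure.pi fun _ : ι => moveDist n).real {w | Happy (step x w) i} =
      (n - (Fintype.card ι - numUnhappy x) : ℕ) * (n : ℝ)⁻¹ *
        (1 - (n : ℝ)⁻¹) ^ (numUnhappy x - 1) := by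
  set P := Measure.pi fun _ : ι => moveDist n
  set free := range n \ image x {j | Happy x j}
  -- `w` is in `box v` iff particle `i` moves to `v` and no other unhappy particle does
  set box : ℕ → Set (ι → ℕ) := fun v =>
    Set.univ.pi fun j => if j = i then {v} else if Happy x j then Set.univ else {v}ᶜ
  have hfree : ∀ v, v ∈ free ↔ v < n ∧ ∀ j, Happy x j → x j ≠ v := fun v => by
    simp [free]
  have hset : {w | Happy (step x w) i} ∩ {w | w i < n} = ⋃ v ∈ free, box v := by
    ext w
    rw [Set.mem_inter_iff, Set.mem_iUnion₂]
    change (∀ j, j ≠ i → step x w j ≠ step x w i) ∧ w i < n ↔ ∃ v, ∃ (_ : v ∈ free), w ∈ box v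
    simp only [box, Set.mem_univ_pi, hfree, exists_prop, step_of_not_happy w hi]
    constructor
    · rintro ⟨hhappy, hlt⟩
      refine ⟨w i, ⟨hlt, fun j hj hxj => ?_⟩, fun j => ?_⟩
      · exact hhappy j (fun h => hi (h ▸ hj)) (by rw [step_of_happy w hj, hxj])
      · split_ifs with hji hj
        · simp [hji]
        · trivial
        · exact (step_of_not_happy w hj).symm.trans_ne (hhappy j hji)
    · rintro ⟨v, ⟨hvn, hvfree⟩, hw⟩
      obtain rfl : w i = v := by simpa using hw i
      refine ⟨fun j hji => ?_, hvn⟩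
      by_cases hj : Happy x j
      · rw [step_of_happy w hj]
        exact hvfree j hj
      · rw [step_of_not_happy w hj]
        simpa [hji, hj] using hw j
  have hnull : P {w | w i < n}ᶜ = 0 :=
    Measure.pi_eval_preimage_null (μ := fun _ : ι => moveDist n) (moveDist_compl_Iio hn)
  have hbox : ∀ v ∈ free, P.real (box v) = (n : ℝ)⁻¹ * (1 - (n : ℝ)⁻¹) ^ (numUnhappy x - 1) := by
    intro v hv
    have hvn := ((hfree v).1 hv).1
    rw [measureReal_pi_pi, ← mul_prod_erase univ _ (mem_univ i), if_pos rfl,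
      moveDist_real_singleton hn hvn, numUnhappy,
      ← card_erase_of_mem (mem_filter.2 ⟨mem_univ i, hi⟩), ← filter_erase, ← prod_const,
      prod_filter]
    refine congrArg _ (prod_congr rfl fun j hj => ?_)
    rw [if_neg (ne_of_mem_erase hj)]
    split_ifs <;> simp [moveDist_real_compl_singleton hn hvn]
  have hdisj : Set.PairwiseDisjoint ↑free box := by
    intro v _ v' _ hvv'
    refine Set.disjoint_left.2 fun w hw hw' => hvv' ?_
    have h := (Set.mem_univ_pi.1 hw) i
    have h' := (Set.mem_univ_pi.1 hw') i
    simp only [↓reduceIte, Set.mem_singleton_iff] at h h'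
    exact h.symm.trans h'
  calc P.real {w | Happy (step x w) i}
      = P.real ({w | Happy (step x w) i} ∩ {w | w i < n}) := by
        rw [measureReal_def, measureReal_def, measure_inter_conull hnull]
    _ = ∑ v ∈ free, P.real (box v) := by
        rw [hset, measureReal_biUnion_finset hdisj fun _ _ => .of_discrete]
    _ = _ := by
        rw [sum_congr rfl hbox, sum_const, card_sdiff_of_subset (image_happy_subset_range hx),
          card_range, card_image_happy, nsmul_eq_mul, mul_assoc]

noncomputable def expectedUnhappy (n M k : ℕ) : ℝ :=
  (k : ℝ) * (1 - (((n : ℝ) - ((M : ℝ) - (k : ℝ))) / n) * (1 - 1 / (n : ℝ)) ^ (k - 1)) +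
    ((M : ℝ) - (k : ℝ)) * (1 - (1 - 1 / (n : ℝ)) ^ k)

lemma integral_numUnhappy_step (hn : 0 < n) (x : ι → ℕ) (hx : ∀ j, x j < n) :
    ∫ w, (numUnhappy (step x w) : ℝ) ∂(Measure.pi fun _ : ι => moveDist n) =
      expectedUnhappy n (Fintype.card ι) (numUnhappy x) := by
  have hk : numUnhappy x ≤ Fintype.card ι := numUnhappy_le x
  have hkn : Fintype.card ι - numUnhappy x ≤ n := by
    simpa [card_image_happy] using card_le_card (image_happy_subset_range hx)
  have hsum : ∀ w, (numUnhappy (step x w) : ℝ) = ∑ i, {w | Happy (step x w) i}ᶜ.indicator 1 w := by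
    intro w
    simp [numUnhappy, card_filter, Set.indicator_apply]
  simp_rw [hsum]
  rw [integral_finsetSum _ fun i _ => (integrable_const 1).indicator .of_discrete]
  simp_rw [integral_indicator_one .of_discrete, probReal_compl_eq_one_sub .of_discrete]
  have hval : ∀ i, 1 - (Measure.pi fun _ : ι => moveDist n).real {w | Happy (step x w) i} =
      if Happy x i then 1 - (1 - (n : ℝ)⁻¹) ^ numUnhappy x
      else 1 - (n - (Fintype.card ι - numUnhappy x) : ℕ) * (n : ℝ)⁻¹ *
        (1 - (n : ℝ)⁻¹) ^ (numUnhappy x - 1) := fun i => by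
    split_ifs with hi
    · rw [measureReal_happy_step_of_happy hn x (hx i) hi]
    · rw [measureReal_happy_step_of_not_happy hn x hx hi]
  rw [sum_congr rfl fun i _ => hval i, sum_ite, sum_const, sum_const, card_happy]
  change _ + numUnhappy x • _ = _
  rw [expectedUnhappy, nsmul_eq_mul, nsmul_eq_mul, Nat.cast_sub hk, Nat.cast_sub hkn,
    Nat.cast_sub hk]
  ring

end UniformStep

section Dynamics

variable {Ωs : Type} (M : ℕ) (G : ℕ × ℕ → Ωs → ℕ)

noncomputable def config (t : ℕ) (ω : Ωs) : Fin M → ℕ := fun i => pos M G ω t i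

def moves (t : ℕ) (ω : Ωs) : Fin M → ℕ := fun i => G (t, i) ω

variable {M G}

lemma U_eq_numUnhappy (ω : Ωs) (t : ℕ) : U M G ω t = numUnhappy (config M G t ω) := by
  rw [U, numUnhappy, card_filter, card_filter, ← Fin.sum_univ_eq_sum_range]
  refine sum_congr rfl fun i _ => ?_
  simp [Happy, config, Fin.forall_iff, Fin.ext_iff]

lemma config_succ (t : ℕ) (ω : Ωs) :
    config M G (t + 1) ω = step (config M G t ω) (moves M G t ω) := by
  funext i
  simp [config, moves, step, pos, Happy, Fin.forall_iff, Fin.ext_iff]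

lemma U_le (ω : Ωs) (t : ℕ) : U M G ω t ≤ M := by
  simpa [U_eq_numUnhappy] using numUnhappy_le (config M G t ω)

lemma measurable_moves_iSup {S : Set (ℕ × ℕ)} {t : ℕ} (hS : ∀ i, (t, i) ∈ S) :
    Measurable[⨆ p ∈ S, MeasurableSpace.comap (G p) inferInstance] (moves M G t) :=
  letI := ⨆ p ∈ S, MeasurableSpace.comap (G p) inferInstance
  measurable_pi_lambda _ fun i =>
    (comap_measurable (G (t, i))).mono (le_iSup₂_of_le (t, (i : ℕ)) (hS i) le_rfl) le_rfl

lemma measurable_config_iSup (t : ℕ) :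
    Measurable[⨆ p ∈ {p : ℕ × ℕ | p.1 < t}, MeasurableSpace.comap (G p) inferInstance]
      (config M G t) := by
  induction t with
  | zero =>
    exact measurable_const (a := fun _ => 0)
  | succ t ih =>
    rw [funext (config_succ t)]
    refine Measurable.of_discrete.comp (g := fun q : (Fin M → ℕ) × (Fin M → ℕ) => step q.1 q.2)
      (Measurable.prodMk (ih.mono ?_ le_rfl) (measurable_moves_iSup fun _ => Nat.lt_succ_self t))
    exact biSup_mono fun p hp => Nat.lt_succ_of_lt hp

lemma measurable_U_comap_config (t : ℕ) :
    Measurable[MeasurableSpace.comap (config M G t) inferInstance] fun ω => U M G ω t := by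
  simp_rw [U_eq_numUnhappy]
  exact (Measurable.of_discrete (f := fun x : Fin M → ℕ => numUnhappy x)).comp
    (comap_measurable _)

variable [MeasurableSpace Ωs] {n : ℕ} {μ : Measure Ωs}

lemma measurable_config (hG : IsDriver n μ G) (t : ℕ) : Measurable (config M G t) :=
  (measurable_config_iSup t).mono (iSup₂_le fun p _ => (hG.meas p).comap_le) le_rfl

lemma measurable_moves (hG : IsDriver n μ G) (t : ℕ) : Measurable (moves M G t) :=
  measurable_pi_lambda _ fun _ => hG.meas _

lemma measurable_U (hG : IsDriver n μ G) (t : ℕ) : Measurable fun ω => U M G ω t :=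
  (measurable_U_comap_config t).mono (measurable_config hG t).comap_le le_rfl

lemma indepFun_config_moves (hG : IsDriver n μ G) (t : ℕ) :
    IndepFun (config M G t) (moves M G t) μ := by
  rw [IndepFun_iff_Indep]
  have hpast_present := indep_iSup_of_disjoint (fun p => (hG.meas p).comap_le)
    ((iIndepFun_iff_iIndep _ _ _).1 hG.indep) (S := {p | p.1 < t}) (T := {p | p.1 = t})
    (Set.disjoint_left.2 fun p hp hp' => (ne_of_lt hp) hp')
  exact indep_of_indep_of_le_right (indep_of_indep_of_le_left hpast_present
    (measurable_config_iSup t).comap_le) (measurable_moves_iSup fun _ => rfl).comap_le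

lemma map_moves (hG : IsDriver n μ G) (t : ℕ) :
    μ.map (moves M G t) = Measure.pi fun _ : Fin M => moveDist n := by
  have h := (hG.indep.precomp (g := fun i : Fin M => (t, (i : ℕ)))
    fun i j hij => Fin.ext (Prod.ext_iff.1 hij).2).map_fun_eq_pi_map
    fun i => (hG.meas _).aemeasurable
  simp only [hG.unif] at h
  exact h

lemma ae_config_lt (hG : IsDriver n μ G) (hn : 0 < n) (t : ℕ) :
    ∀ᵐ ω ∂μ, ∀ i, config M G t ω i < n := by
  induction t with
  | zero => exact ae_of_all _ fun _ _ => hn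
  | succ t ih =>
    have hmoves : ∀ᵐ ω ∂μ, ∀ i, moves M G t ω i < n := ae_all_iff.2 fun i =>
      ae_of_ae_map (hG.meas _).aemeasurable (hG.unif _ ▸ ae_iff.2 (moveDist_compl_Iio hn))
    filter_upwards [ih, hmoves] with ω hconfig hmoves i
    rw [config_succ, step]
    split_ifs
    exacts [hconfig i, hmoves i]

lemma setIntegral_U_succ_preimage_config (hG : IsDriver n μ G) (hn : 0 < n) (t : ℕ)
    (x : Fin M → ℕ) :
    ∫ ω in config M G t ⁻¹' {x}, (U M G ω (t + 1) : ℝ) ∂μ =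
      expectedUnhappy n M (numUnhappy x) * μ.real (config M G t ⁻¹' {x}) := by
  have := hG.isProb
  have hA : MeasurableSet (config M G t ⁻¹' {x}) := measurable_config hG t .of_discrete
  by_cases hx : ∀ i, x i < n
  · -- on the fibre the next count depends only on the fresh moves, which are independent of it
    set φ : (Fin M → ℕ) → ℝ := ({x} : Set (Fin M → ℕ)).indicator 1
    set ψ : (Fin M → ℕ) → ℝ := fun w => numUnhappy (step x w)
    have hU : ∀ ω, (config M G t ⁻¹' {x}).indicator (fun ω => (U M G ω (t + 1) : ℝ)) ω =
        (φ ∘ config M G t * ψ ∘ moves M G t) ω := fun ω => by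
      by_cases hω : config M G t ω = x
      · simp [φ, ψ, hω, U_eq_numUnhappy, config_succ]
      · simp [φ, hω]
    have hφ : ∀ ω, φ (config M G t ω) = (config M G t ⁻¹' {x}).indicator 1 ω := fun ω => by
      by_cases hω : config M G t ω = x <;> simp [φ, hω]
    calc ∫ ω in config M G t ⁻¹' {x}, (U M G ω (t + 1) : ℝ) ∂μ
        = ∫ ω, (φ ∘ config M G t * ψ ∘ moves M G t) ω ∂μ := by
          rw [← integral_indicator hA]
          exact integral_congr_ae (ae_of_all _ hU)
      _ = (∫ ω, φ (config M G t ω) ∂μ) * ∫ ω, ψ (moves M G t ω) ∂μ :=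
          ((indepFun_config_moves hG t).comp Measurable.of_discrete
            Measurable.of_discrete).integral_mul_eq_mul_integral
            (Measurable.of_discrete.comp (measurable_config hG t)).aestronglyMeasurable
            (Measurable.of_discrete.comp (measurable_moves hG t)).aestronglyMeasurable
      _ = μ.real (config M G t ⁻¹' {x}) * ∫ w, ψ w ∂(Measure.pi fun _ : Fin M => moveDist n) := by
          rw [← map_moves hG t, integral_map (measurable_moves hG t).aemeasurable
            Measurable.of_discrete.aestronglyMeasurable, funext hφ, integral_indicator_one hA]
      _ = _ := by rw [integral_numUnhappy_step hn x hx, Fintype.card_fin, mul_comm]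
  · have hnull : μ (config M G t ⁻¹' {x}) = 0 :=
      measure_mono_null (fun ω (hω : config M G t ω = x) h => hx (hω ▸ h))
        (ae_config_lt hG hn t)
    rw [Measure.restrict_eq_zero.2 hnull, integral_zero_measure, measureReal_def, hnull,
      ENNReal.toReal_zero, mul_zero]

lemma condExp_U_succ_comap_config (hG : IsDriver n μ G) (hn : 0 < n) (t : ℕ) :
    μ[(fun ω => (U M G ω (t + 1) : ℝ))|MeasurableSpace.comap (config M G t) inferInstance]
      =ᵐ[μ] fun ω => expectedUnhappy n M (U M G ω t) := by
  have := hG.isProb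
  have hfiber := condExp_comap_ae_eq_of_setIntegral_fiber (measurable_config hG t)
    (integrable_comp_of_le (measurable_U hG (t + 1)) (U_le · _) Nat.cast)
    (g := fun x => expectedUnhappy n M (numUnhappy x))
    (by simpa [U_eq_numUnhappy] using
      integrable_comp_of_le (measurable_U hG t) (U_le · _) (expectedUnhappy n M))
    (setIntegral_U_succ_preimage_config hG hn t)
  simpa only [← U_eq_numUnhappy] using hfiber

end Dynamics

theorem statement2_general (n M : ℕ) (hn : 1 ≤ n)
    (Ωs : Type) [MeasurableSpace Ωs] (μ : Measure Ωs) (G : ℕ × ℕ → Ωs → ℕ)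
    (hG : IsDriver n μ G) (t : ℕ) :
    μ[(fun ω => (U M G ω (t + 1) : ℝ))|MeasurableSpace.comap (fun ω => U M G ω t) ⊤]
      =ᵐ[μ]
      fun ω =>
        (U M G ω t : ℝ) *
            (1 - (((n : ℝ) - ((M : ℝ) - (U M G ω t : ℝ))) / n) *
              (1 - 1 / (n : ℝ)) ^ (U M G ω t - 1)) +
          ((M : ℝ) - (U M G ω t : ℝ)) * (1 - (1 - 1 / (n : ℝ)) ^ (U M G ω t)) := by
  have := hG.isProb
  have hX := (measurable_config (M := M) hG t).comap_le
  have hUX := (measurable_U_comap_config (M := M) (G := G) t).comap_le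
  calc μ[(fun ω => (U M G ω (t + 1) : ℝ))|MeasurableSpace.comap (fun ω => U M G ω t) ⊤]
      =ᵐ[μ] μ[μ[(fun ω => (U M G ω (t + 1) : ℝ))|
        MeasurableSpace.comap (config M G t) inferInstance]|
          MeasurableSpace.comap (fun ω => U M G ω t) ⊤] :=
        (condExp_condExp_of_le hUX hX).symm
    _ =ᵐ[μ] μ[(fun ω => expectedUnhappy n M (U M G ω t))|
          MeasurableSpace.comap (fun ω => U M G ω t) ⊤] :=
        condExp_congr_ae (condExp_U_succ_comap_config hG hn t)
    _ = fun ω => expectedUnhappy n M (U M G ω t) :=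
        condExp_of_stronglyMeasurable (hUX.trans hX)
          ((Measurable.of_discrete (f := expectedUnhappy n M)).comp
            (comap_measurable _)).stronglyMeasurable
          (integrable_comp_of_le (measurable_U hG t) (U_le · _) _)

/-- Lemma 2.3: exact formula for `E[U_{t+1} | U_t]`. -/
theorem statement2 (n M : ℕ) (hn : 1 ≤ n) (hM : 2 ≤ M)
    (Ωs : Type) [MeasurableSpace Ωs] (μ : Measure Ωs) (G : ℕ × ℕ → Ωs → ℕ)
    (hG : IsDriver n μ G) (t : ℕ) :
    μ[(fun ω => (U M G ω (t + 1) : ℝ))|MeasurableSpace.comap (fun ω => U M G ω t) ⊤]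
      =ᵐ[μ]
      fun ω =>
        (U M G ω t : ℝ) *
            (1 - (((n : ℝ) - ((M : ℝ) - (U M G ω t : ℝ))) / n) *
              (1 - 1 / (n : ℝ)) ^ (U M G ω t - 1)) +
          ((M : ℝ) - (U M G ω t : ℝ)) * (1 - (1 - 1 / (n : ℝ)) ^ (U M G ω t)) :=
  statement2_general n M hn Ωs μ G hG t

end Dispersion
end

section
/- Let |ε| < 1. Then for every k ∈ ℕ the probability that the Galton–Watson process 𝒯(ε) survives for at least k generations satisfies P(𝒯(ε) ≥ k) ≥ ε / (1 − (1 − ε)(1 + ε)^{−k}). -/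
private lemma key_step9 (ε t : ℝ) (h1 : -1 < ε) (h2 : ε < 1) (hne : ε ≠ 0)
    (hsign : 0 ≤ ε * (1 - (1 + ε) * t)) (ht : 0 < t) :
    ε / (1 - (1 - ε) * t) ≤
      (1 + ε) * (ε / (1 - (1 - ε) * ((1 + ε) * t))) *
        (1 - (ε / (1 - (1 - ε) * ((1 + ε) * t))) / 2) := by
  have hεp : (0:ℝ) < 1 + ε := by linarith
  rcases hne.lt_or_gt with hneg | hpos
  · -- ε < 0 : then (1+ε)t ≥ 1
    have ht1 : 1 ≤ (1 + ε) * t := by nlinarith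
    have htt : 1 ≤ t := by nlinarith
    have hd : 1 - (1 - ε) * ((1 + ε) * t) ≤ ε := by nlinarith
    have hd' : 1 - (1 - ε) * t ≤ ε := by nlinarith
    have hdneg : 1 - (1 - ε) * ((1 + ε) * t) < 0 := by linarith
    have hd'neg : 1 - (1 - ε) * t < 0 := by linarith
    set d : ℝ := 1 - (1 - ε) * ((1 + ε) * t) with hdd
    set d' : ℝ := 1 - (1 - ε) * t with hdd'
    have hdne : d ≠ 0 := ne_of_lt hdneg
    have hRe : (1 + ε) * (ε / d) * (1 - (ε / d) / 2)
        = (ε * (1 + ε) * (2 * d - ε)) / (2 * d ^ 2) := by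
      field_simp
    rw [hRe, show ε / d' = (-ε) / (-d') by rw [neg_div_neg_eq],
      div_le_div_iff₀ (by linarith) (by positivity)]
    have hkey : 0 ≤ ε * (1 - (1 + ε) * t) * (1 - ε) :=
      mul_nonneg hsign (by linarith)
    rw [hdd, hdd']
    nlinarith [hkey, sq_nonneg ε]
  · -- ε > 0 : then (1+ε)t ≤ 1
    have ht1 : (1 + ε) * t ≤ 1 := by nlinarith
    have htt : t ≤ 1 := by nlinarith
    have hdpos : 0 < 1 - (1 - ε) * ((1 + ε) * t) := by nlinarith
    have hd'pos : 0 < 1 - (1 - ε) * t := by nlinarith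
    set d : ℝ := 1 - (1 - ε) * ((1 + ε) * t) with hdd
    set d' : ℝ := 1 - (1 - ε) * t with hdd'
    have hdne : d ≠ 0 := ne_of_gt hdpos
    have hRe : (1 + ε) * (ε / d) * (1 - (ε / d) / 2)
        = (ε * (1 + ε) * (2 * d - ε)) / (2 * d ^ 2) := by
      field_simp
    rw [hRe, div_le_div_iff₀ hd'pos (by positivity)]
    have hkey : 0 ≤ ε * (1 - (1 + ε) * t) * (1 - ε) :=
      mul_nonneg hsign (by linarith)
    rw [hdd, hdd']
    nlinarith [hkey, sq_nonneg ε]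

/-- Lemma 2.9, lower bound: if `x k = P(𝒯(ε) ≥ k)` denotes the
probability that the Galton–Watson process with offspring distribution
`2·Ber((1+ε)/2)` survives for at least `k` generations, so that `x 0 = 1` and
`x (k+1) = (1+ε) · x k · (1 - x k / 2)`, then
`x k ≥ ε / (1 - (1 - ε)(1 + ε)^{-k})` for every `k ≥ 1`. -/
theorem statement9 (ε : ℝ) (hε : |ε| < 1) (x : ℕ → ℝ) (hx0 : x 0 = 1)
    (hrec : ∀ k : ℕ, x (k + 1) = (1 + ε) * x k * (1 - x k / 2)) (k : ℕ) (hk : 1 ≤ k) :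
    ε / (1 - (1 - ε) * (1 + ε) ^ (-(k : ℤ))) ≤ x k := by
  obtain ⟨hl, hr⟩ := abs_lt.mp hε
  have hεp : (0:ℝ) < 1 + ε := by linarith
  have hεne : (1:ℝ) + ε ≠ 0 := ne_of_gt hεp
  have hrange : ∀ n, 0 ≤ x n ∧ x n ≤ 1 := by
    intro n
    induction n with
    | zero => constructor <;> simp [hx0]
    | succ n ih =>
      obtain ⟨h0, h1⟩ := ih
      rw [hrec n]
      constructor
      · nlinarith [mul_nonneg h0 (show (0:ℝ) ≤ 1 - x n / 2 by linarith)]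
      · nlinarith [sq_nonneg (1 - x n), mul_nonneg h0 h0]
  rcases eq_or_ne ε 0 with h0 | h0
  · rw [h0]
    simpa using (hrange k).1
  · clear hk
    induction k with
    | zero =>
      simp only [Nat.cast_zero, neg_zero, zpow_zero, mul_one, hx0]
      rw [show (1:ℝ) - (1 - ε) = ε by ring, div_self h0]
    | succ k ih =>
      set q : ℝ := (1 + ε) ^ (-(k : ℤ)) with hqdef
      have hqpos : 0 < q := zpow_pos hεp _
      set t : ℝ := (1 + ε) ^ (-((k + 1 : ℕ) : ℤ)) with htdef
      have htpos : 0 < t := zpow_pos hεp _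
      have hqt : (1 + ε) * t = q := by
        rw [htdef, hqdef, show (-((k + 1 : ℕ) : ℤ)) = -(k : ℤ) + (-1) by push_cast; ring,
          zpow_add₀ hεne, zpow_neg_one]
        field_simp
      have hsign : 0 ≤ ε * (1 - (1 + ε) * t) := by
        rw [hqt]
        rcases h0.lt_or_gt with hneg | hpos
        · have : (1:ℝ) ≤ q := by
            rw [hqdef]
            apply one_le_zpow_of_nonpos₀ hεp (by linarith) (by omega)
          nlinarith
        · have : q ≤ 1 := by
            rw [hqdef]
            apply zpow_le_one_of_nonpos₀ (by linarith) (by omega)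
          nlinarith
      have hkey := key_step9 ε t hl hr h0 hsign htpos
      rw [hqt] at hkey
      have hb1 : ε / (1 - (1 - ε) * q) ≤ 1 := le_trans ih (hrange k).2
      have hmono : (1 + ε) * (ε / (1 - (1 - ε) * q)) * (1 - (ε / (1 - (1 - ε) * q)) / 2)
          ≤ (1 + ε) * x k * (1 - x k / 2) := by
        set b : ℝ := ε / (1 - (1 - ε) * q)
        have hx1 := (hrange k).2
        nlinarith [mul_nonneg (mul_nonneg hεp.le (sub_nonneg.2 ih))
          (show (0:ℝ) ≤ 1 - (x k + b) / 2 by linarith)]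
      rw [hrec k]
      calc ε / (1 - (1 - ε) * t) ≤ _ := hkey
        _ ≤ _ := hmono
end
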